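/- Fix positive integers b, c and positive integers a_1, a_2 with 0 < a_1 < b a_2 and 0 < a_2 < c a_1 (i.e., (a_1,a_2) is in case (6)). Let the coefficients ē(p,q) be defined by ē(0,0)=1 and the recurrence (<=, >): ē(p,q) = \sum_{k=1}^{p}(-1)^{k-1} ē(p-k,q) [[a_2-cq]_+ + k-1 choose k]_{v^b} if c a_1 q <= b a_2 p, and ē(p,q) = \sum_{l=1}^{q}(-1)^{l-1} ē(p,q-l) [[a_1-bp]_+ + l-1 choose l]_{v^c} if c a_1 q > b a_2 p. Then ē(p,q) = 0 whenever p >= a_1/b and q >= a_2/c; in particular only finitely many ē(p,q) are nonzero. -/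

import Mathlib

open Finset

noncomputable section

/-- Field of rational functions over ℚ, containing `ℤ[w^{±1}]`. -/
abbrev KK : Type := RatFunc ℚ

/-- The indeterminate `w`. -/
def wvar : KK := RatFunc.X

/-- The bar-invariant quantum integer `[n]_u = (u^n - u^{-n})/(u - u⁻¹)`. -/
def qint (u : KK) (n : ℤ) : KK := (u ^ n - u ^ (-n)) / (u - u⁻¹)

/-- The bar-invariant quantum binomial coefficient. -/
def qbinom (u : KK) (n : ℤ) (k : ℕ) : KK :=
  (∏ i ∈ Finset.range k, qint u (n - i)) / (∏ i ∈ Finset.range k, qint u ((i : ℤ) + 1))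

/-!
In the quadrant `a₁ ≤ bp`, `a₂ ≤ cq` both recurrences express `ē(p,q)` through the coefficients
`[k-1 choose k] = 0`. Along a row (fixed `q`) the `(≤)` recurrence holds for all large `p`, with
`m = [a₂ - cq]_+` fixed; it says that `Σ_p ē(p,q) x^p` times `Σ_k [-m choose k] x^k` is a
polynomial. By the `u`-Pascal rule the latter series is inverse to the polynomial
`Σ_k [m choose k] x^k` of degree `m`, so the row has finite support. The same holds for columns
with the `(>)` recurrence, and the quadrant together with the finitely many rows `cq < a₂` and
columns `bp < a₁` covers everything.
-/

open PowerSeries Filter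

variable {u : KK}

lemma qint_zero (u : KK) : qint u 0 = 0 := by simp [qint]

lemma qint_neg (u : KK) (n : ℤ) : qint u (-n) = -qint u n := by
  rw [qint, qint, neg_neg, ← neg_div, neg_sub]

lemma qint_inv (u : KK) (n : ℤ) : qint u⁻¹ n = qint u n := by
  rw [qint, qint, inv_zpow', inv_zpow', inv_inv, neg_neg, ← neg_sub, ← neg_sub u, neg_div_neg_eq]

lemma qint_add (hu0 : u ≠ 0) (m k : ℤ) :
    qint u (m + k) = u ^ (-k) * qint u m + u ^ m * qint u k := by
  simp only [qint, mul_div_assoc', ← add_div, mul_sub, ← zpow_add₀ hu0]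
  ring_nf

lemma qint_natCast_ne_zero (hu0 : u ≠ 0) (hu : ∀ n : ℕ, 0 < n → u ^ n ≠ 1) {j : ℕ}
    (hj : 0 < j) : qint u j ≠ 0 := by
  have hdiff : ∀ n : ℕ, 0 < n → u ^ (n : ℤ) - u ^ (-(n : ℤ)) ≠ 0 := by
    intro n hn h
    rw [sub_eq_zero, zpow_neg, zpow_natCast] at h
    apply hu (2 * n) (by omega)
    rw [two_mul, pow_add]
    nth_rw 2 [h]
    exact mul_inv_cancel₀ (pow_ne_zero n hu0)
  simpa [qint] using div_ne_zero (hdiff j hj) (by simpa using hdiff 1 one_pos)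

lemma qbinom_zero (u : KK) (n : ℤ) : qbinom u n 0 = 1 := by simp [qbinom]

lemma qbinom_natCast_of_lt (u : KK) {n k : ℕ} (h : n < k) : qbinom u n k = 0 := by
  rw [qbinom, prod_eq_zero (mem_range.2 h) (by rw [sub_self, qint_zero]), zero_div]

lemma qbinom_neg (u : KK) (n : ℤ) (k : ℕ) :
    qbinom u (-n) k = (-1) ^ k * qbinom u (n + k - 1) k := by
  have hnum : ∏ i ∈ range k, qint u (-n - i) = (-1) ^ k * ∏ i ∈ range k, qint u (n + i) := by
    have hneg := prod_neg (s := range k) fun i : ℕ => qint u (n + i)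
    rw [card_range] at hneg
    rw [← hneg]
    exact prod_congr rfl fun i _ => by rw [← neg_add', qint_neg]
  have hrefl : ∏ i ∈ range k, qint u (n + k - 1 - i) = ∏ i ∈ range k, qint u (n + i) := by
    rw [← prod_range_reflect]
    exact prod_congr rfl fun i hi => by have := mem_range.1 hi; congr 1; omega
  rw [qbinom, qbinom, hnum, hrefl, mul_div_assoc]

lemma qbinom_inv (u : KK) (n : ℤ) (k : ℕ) : qbinom u⁻¹ n k = qbinom u n k := by
  simp only [qbinom, qint_inv]

lemma qbinom_succ (hu0 : u ≠ 0) (hu : ∀ n : ℕ, 0 < n → u ^ n ≠ 1) (n : ℤ) (k : ℕ) :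
    qbinom u n (k + 1) =
      u ^ (-(k + 1 : ℤ)) * qbinom u (n - 1) (k + 1) + u ^ (n - (k + 1)) * qbinom u (n - 1) k := by
  have hD : ∏ i ∈ range k, qint u ((i : ℤ) + 1) ≠ 0 := prod_ne_zero_iff.2 fun i _ => by
    exact_mod_cast qint_natCast_ne_zero hu0 hu i.succ_pos
  have hQ : qint u (k + 1) ≠ 0 := by exact_mod_cast qint_natCast_ne_zero hu0 hu k.succ_pos
  have hnum : ∏ i ∈ range (k + 1), qint u (n - i) =
      qint u n * ∏ i ∈ range k, qint u (n - 1 - i) := by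
    rw [prod_range_succ', mul_comm]
    push_cast
    simp only [sub_zero, sub_add_eq_sub_sub_swap]
  have hnum' : ∏ i ∈ range (k + 1), qint u (n - 1 - i) =
      (∏ i ∈ range k, qint u (n - 1 - i)) * qint u (n - (k + 1)) := by
    rw [prod_range_succ, sub_sub, add_comm (1 : ℤ)]
  have hden : ∏ i ∈ range (k + 1), qint u ((i : ℤ) + 1) =
      (∏ i ∈ range k, qint u ((i : ℤ) + 1)) * qint u (k + 1) := by
    rw [prod_range_succ]
  have hpascal := qint_add hu0 (n - (k + 1)) (k + 1)
  rw [sub_add_cancel] at hpascal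
  rw [qbinom, qbinom, qbinom, hnum, hnum', hden, hpascal]
  field_simp

lemma coeff_succ_one_add_C_mul_X_mul {R : Type*} [CommSemiring R] (a : R) (f : PowerSeries R)
    (k : ℕ) : coeff (k + 1) ((1 + C a * X) * f) = coeff (k + 1) f + a * coeff k f := by
  rw [add_mul, one_mul, map_add, mul_assoc, coeff_C_mul, coeff_succ_X_mul]

def qbinomSeries (u : KK) (n : ℤ) : PowerSeries KK := mk (qbinom u n)

@[simp]
lemma coeff_qbinomSeries (u : KK) (n : ℤ) (k : ℕ) : coeff k (qbinomSeries u n) = qbinom u n k :=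
  coeff_mk _ _

lemma qbinomSeries_zero (u : KK) : qbinomSeries u 0 = 1 := by
  ext (_ | k)
  · simp [qbinom_zero]
  · rw [coeff_qbinomSeries, coeff_one, if_neg k.succ_ne_zero]
    exact_mod_cast qbinom_natCast_of_lt u k.succ_pos

lemma qbinomSeries_inv (u : KK) (n : ℤ) : qbinomSeries u⁻¹ n = qbinomSeries u n := by
  rw [qbinomSeries, qbinomSeries]
  congr 1
  exact funext (qbinom_inv u n)

lemma qbinomSeries_add_one (hu0 : u ≠ 0) (hu : ∀ n : ℕ, 0 < n → u ^ n ≠ 1) (n : ℤ) :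
    qbinomSeries u (n + 1) = (1 + C (u ^ n) * X) * rescale u⁻¹ (qbinomSeries u n) := by
  ext (_ | k)
  · rw [add_mul, one_mul, map_add, mul_assoc, coeff_C_mul, coeff_zero_X_mul, mul_zero, add_zero,
      coeff_rescale]
    simp [qbinom_zero]
  · rw [coeff_succ_one_add_C_mul_X_mul, coeff_rescale, coeff_rescale, coeff_qbinomSeries,
      coeff_qbinomSeries, coeff_qbinomSeries]
    have hlow : u ^ (-(k + 1 : ℤ)) = u⁻¹ ^ (k + 1) := by
      rw [zpow_neg, inv_pow]
      norm_cast
    have hhigh : u ^ (n + 1 - (k + 1)) = u ^ n * u⁻¹ ^ k := by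
      rw [show n + 1 - (k + 1) = n + -(k : ℤ) by ring, zpow_add₀ hu0, zpow_neg, zpow_natCast,
        inv_pow]
    rw [qbinom_succ hu0 hu, add_sub_cancel_right, hlow, hhigh]
    ring

lemma rescale_inv_qbinomSeries_neg (hu0 : u ≠ 0) (hu : ∀ n : ℕ, 0 < n → u ^ n ≠ 1) (n : ℤ) :
    rescale u⁻¹ (qbinomSeries u (-n)) = (1 + C (u ^ n) * X) * qbinomSeries u (-n - 1) := by
  have hu' : ∀ k : ℕ, 0 < k → u⁻¹ ^ k ≠ 1 := fun k hk => by
    rw [inv_pow]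
    exact inv_ne_one.2 (hu k hk)
  have h := qbinomSeries_add_one (inv_ne_zero hu0) hu' (-n - 1)
  rw [sub_add_cancel, qbinomSeries_inv, qbinomSeries_inv, inv_inv, inv_zpow', neg_sub,
    sub_neg_eq_add] at h
  rw [h, map_mul, rescale_rescale, mul_inv_cancel₀ hu0, rescale_one, RingHom.id_apply]
  congr 1
  ext j
  simp only [map_add, map_one, coeff_rescale, coeff_C_mul, coeff_X, add_comm (1 : ℤ),
    zpow_add_one₀ hu0]
  split_ifs with hj
  · subst hj
    field_simp
  · simp

lemma qbinomSeries_mul_neg (hu0 : u ≠ 0) (hu : ∀ n : ℕ, 0 < n → u ^ n ≠ 1) (m : ℕ) :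
    qbinomSeries u m * qbinomSeries u (-m) = 1 := by
  induction m with
  | zero => simp [qbinomSeries_zero]
  | succ m ih =>
    push_cast
    rw [qbinomSeries_add_one hu0 hu, neg_add', mul_assoc, mul_left_comm,
      ← rescale_inv_qbinomSeries_neg hu0 hu, ← map_mul, ih, map_one]

lemma coeff_qbinomSeries_neg_mul_eq_zero (n : ℤ) (f : ℕ → KK) {p : ℕ}
    (hp : f p = ∑ k ∈ Icc 1 p, (-1) ^ (k - 1) * f (p - k) * qbinom u (n + k - 1) k) :
    coeff p (qbinomSeries u (-n) * mk f) = 0 := by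
  rw [coeff_mul, Nat.sum_antidiagonal_eq_sum_range_succ
      (fun i j => coeff i (qbinomSeries u (-n)) * coeff j (mk f)),
    range_eq_Ico, sum_eq_sum_Ico_succ_bot p.succ_pos, zero_add, Nat.succ_eq_add_one,
    Ico_add_one_right_eq_Icc]
  simp only [coeff_qbinomSeries, coeff_mk, qbinom_zero, Nat.sub_zero]
  rw [hp, one_mul, ← sum_add_distrib]
  refine sum_eq_zero fun k hk => ?_
  obtain ⟨i, rfl⟩ : ∃ i, k = i + 1 := ⟨k - 1, by have := (mem_Icc.1 hk).1; omega⟩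
  rw [qbinom_neg, Nat.add_sub_cancel, pow_succ]
  ring

theorem eventually_eq_zero_of_qbinom_recurrence (hu0 : u ≠ 0)
    (hu : ∀ n : ℕ, 0 < n → u ^ n ≠ 1) (m : ℕ) (f : ℕ → KK)
    (hf : ∀ᶠ p in atTop, f p = ∑ k ∈ Icc 1 p, (-1) ^ (k - 1) * f (p - k) * qbinom u (m + k - 1) k) :
    ∀ᶠ p in atTop, f p = 0 := by
  obtain ⟨p₀, hp₀⟩ := hf.exists_forall_of_atTop
  have hfactor : mk f = (qbinomSeries u (-m) * mk f) * qbinomSeries u m := by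
    rw [mul_comm, ← mul_assoc, qbinomSeries_mul_neg hu0 hu, one_mul]
  filter_upwards [eventually_ge_atTop (p₀ + m)] with p hp
  rw [← coeff_mk p f, hfactor, coeff_mul]
  refine sum_eq_zero fun ij hij => ?_
  rw [HasAntidiagonal.mem_antidiagonal] at hij
  rcases le_or_gt p₀ ij.1 with h | h
  · rw [coeff_qbinomSeries_neg_mul_eq_zero m f (hp₀ _ h), zero_mul]
  · rw [coeff_qbinomSeries, qbinom_natCast_of_lt u (by omega : m < ij.2), mul_zero]

lemma sum_mul_qbinom_max_eq_zero (u : KK) {x : ℤ} (hx : x ≤ 0) (g : ℕ → KK) (n : ℕ) :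
    ∑ k ∈ Icc 1 n, g k * qbinom u (max x 0 + k - 1) k = 0 :=
  sum_eq_zero fun k hk => by
    have hk1 := (mem_Icc.1 hk).1
    rw [max_eq_right hx, zero_add, show (k : ℤ) - 1 = (k - 1 : ℕ) by omega,
      qbinom_natCast_of_lt u (by omega), mul_zero]

lemma wvar_pow_ne_one {n : ℕ} (hn : 0 < n) : wvar ^ n ≠ 1 := by
  intro h
  have hX : (Polynomial.X : Polynomial ℚ) ^ n = 1 :=
    RatFunc.algebraMap_injective ℚ (by rw [map_pow, map_one, RatFunc.algebraMap_X]; exact h)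
  simpa [hn.ne'] using congrArg Polynomial.natDegree hX

lemma finite_setOf_ne_zero_of_eventually {M : Type*} [Zero M] (f : ℕ → ℕ → M) (P Q : ℕ)
    (hquad : ∀ p q, P ≤ p → Q ≤ q → f p q = 0)
    (hrow : ∀ q, ∀ᶠ p in atTop, f p q = 0) (hcol : ∀ p, ∀ᶠ q in atTop, f p q = 0) :
    {pq : ℕ × ℕ | f pq.1 pq.2 ≠ 0}.Finite := by
  simp only [← Nat.cofinite_eq_atTop, eventually_cofinite] at hrow hcol
  refine (((Set.finite_Iio Q).biUnion fun q _ => (hrow q).prod (Set.finite_singleton q)).union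
    ((Set.finite_Iio P).biUnion fun p _ => (Set.finite_singleton p).prod (hcol p))).subset ?_
  rintro ⟨p, q⟩ hpq
  by_cases hq : q < Q
  · exact Or.inl (Set.mem_biUnion hq ⟨hpq, rfl⟩)
  · have hp : p < P := by
      by_contra hp
      exact hpq (hquad p q (by omega) (by omega))
    exact Or.inr (Set.mem_biUnion hp ⟨rfl, hpq⟩)

theorem upper_quasi_greedy_finite_support_general (b c : ℕ) (hb : 0 < b) (hc : 0 < c)
    (a1 a2 : ℤ) (h1 : 0 < a1) (h2 : 0 < a2)
    (e : ℕ → ℕ → KK)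
    (hrec1 : ∀ p q : ℕ, (p, q) ≠ (0, 0) → (c : ℤ) * a1 * q ≤ (b : ℤ) * a2 * p →
      e p q = ∑ k ∈ Finset.Icc 1 p, (-1 : KK) ^ (k - 1) * e (p - k) q *
        qbinom (wvar ^ b) (max (a2 - c * q) 0 + (k : ℤ) - 1) k)
    (hrec2 : ∀ p q : ℕ, (p, q) ≠ (0, 0) → (b : ℤ) * a2 * p < (c : ℤ) * a1 * q →
      e p q = ∑ l ∈ Finset.Icc 1 q, (-1 : KK) ^ (l - 1) * e p (q - l) *
        qbinom (wvar ^ c) (max (a1 - b * p) 0 + (l : ℤ) - 1) l) :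
    (∀ p q : ℕ, a1 ≤ b * p → a2 ≤ c * q → e p q = 0) ∧
    {pq : ℕ × ℕ | e pq.1 pq.2 ≠ 0}.Finite := by
  have hw0 (d : ℕ) : (wvar : KK) ^ d ≠ 0 := pow_ne_zero d RatFunc.X_ne_zero
  have hw {d : ℕ} (hd : 0 < d) (n : ℕ) (hn : 0 < n) : ((wvar : KK) ^ d) ^ n ≠ 1 := by
    rw [← pow_mul]
    exact wvar_pow_ne_one (Nat.mul_pos hd hn)
  have hquad : ∀ p q : ℕ, a1 ≤ b * p → a2 ≤ c * q → e p q = 0 := by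
    intro p q hp hq
    have hpq : (p, q) ≠ (0, 0) := by
      rintro ⟨⟩
      simp only [Nat.cast_zero, mul_zero] at hp
      omega
    rcases le_or_gt ((c : ℤ) * a1 * q) (b * a2 * p) with h | h
    · rw [hrec1 p q hpq h]
      exact sum_mul_qbinom_max_eq_zero _ (by linarith) _ p
    · rw [hrec2 p q hpq h]
      exact sum_mul_qbinom_max_eq_zero _ (by linarith) _ q
  refine ⟨hquad, finite_setOf_ne_zero_of_eventually e a1.toNat a2.toNat ?_ ?_ ?_⟩
  · intro p q hp hq
    apply hquad <;> nlinarith [Int.toNat_of_nonneg h1.le, Int.toNat_of_nonneg h2.le]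
  · intro q
    refine eventually_eq_zero_of_qbinom_recurrence (hw0 b) (hw hb) (a2 - c * q).toNat _ ?_
    filter_upwards [eventually_gt_atTop 0, (tendsto_natCast_atTop_atTop.const_mul_atTop'
      (by positivity : (0 : ℤ) < b * a2)).eventually_gt_atTop (c * a1 * q)] with p hp0 hp
    rw [hrec1 p q (by simp [hp0.ne']) hp.le, Int.toNat_eq_max]
  · intro p
    refine eventually_eq_zero_of_qbinom_recurrence (hw0 c) (hw hc) (a1 - b * p).toNat _ ?_
    filter_upwards [eventually_gt_atTop 0, (tendsto_natCast_atTop_atTop.const_mul_atTop'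
      (by positivity : (0 : ℤ) < c * a1)).eventually_gt_atTop (b * a2 * p)] with q hq0 hq
    rw [hrec2 p q (by simp [hq0.ne']) hq, Int.toNat_eq_max]

/-- For an imaginary `(a_1,a_2)` (case (6)), the coefficients `ē(p,q)` defined by the
`(≤, >)` recurrence vanish when `p ≥ a_1/b` and `q ≥ a_2/c`; in particular only
finitely many of them are nonzero. -/
theorem upper_quasi_greedy_finite_support (b c : ℕ) (hb : 0 < b) (hc : 0 < c)
    (a1 a2 : ℤ) (h1 : 0 < a1) (h1' : a1 < b * a2) (h2 : 0 < a2) (h2' : a2 < c * a1)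
    (e : ℕ → ℕ → KK) (h00 : e 0 0 = 1)
    (hrec1 : ∀ p q : ℕ, (p, q) ≠ (0, 0) → (c : ℤ) * a1 * q ≤ (b : ℤ) * a2 * p →
      e p q = ∑ k ∈ Finset.Icc 1 p, (-1 : KK) ^ (k - 1) * e (p - k) q *
        qbinom (wvar ^ b) (max (a2 - c * q) 0 + (k : ℤ) - 1) k)
    (hrec2 : ∀ p q : ℕ, (p, q) ≠ (0, 0) → (b : ℤ) * a2 * p < (c : ℤ) * a1 * q →
      e p q = ∑ l ∈ Finset.Icc 1 q, (-1 : KK) ^ (l - 1) * e p (q - l) *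
        qbinom (wvar ^ c) (max (a1 - b * p) 0 + (l : ℤ) - 1) l) :
    (∀ p q : ℕ, a1 ≤ b * p → a2 ≤ c * q → e p q = 0) ∧
    {pq : ℕ × ℕ | e pq.1 pq.2 ≠ 0}.Finite :=
  upper_quasi_greedy_finite_support_general b c hb hc a1 a2 h1 h2 e hrec1 hrec2
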